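/- arXiv:0711.4949 — 3 statements merged into one kernel-verified Lean document; each statement's English description precedes it below -/
import Mathlib

section
/- Let A be a unital C*-algebra and p, q projections in A with ‖qp − pq‖ < ε < 1/4. Then there exists a projection q̃ ∈ A with ‖q̃ − q‖ < 3ε and q̃p = pq̃. -/
/-!
Pinch `q` along `p`: `x = p q p + (1 - p) q (1 - p)` commutes with `p`, and
`x - q = (2p - 1)(q p - p q)` with `2p - 1` unitary, so `‖x - q‖ = ‖q p - p q‖ < ε`.
Moreover `x² - x = -(x - q)²`, so `‖x² - x‖ < ε² < 1/4`. Hence `1/2` is not in the spectrum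
of the self-adjoint `x`, and applying the step function `χ_{[1/2, ∞)}` to `x` gives a projection
commuting with `p`. On the spectrum `|χ(t) - t| ≤ 2|t² - t|`, so it lies within `2ε²` of `x`,
and within `ε + 2ε² < 3ε` of `q`.
-/

section Pinching

variable {R : Type*} [Ring R]

def pinching (p a : R) : R := p * a * p + (1 - p) * a * (1 - p)

variable {p : R}

theorem commute_pinching (hp : IsIdempotentElem p) (a : R) : Commute (pinching p a) p := by
  simp only [Commute, SemiconjBy, pinching, add_mul, mul_add, mul_sub, sub_mul, mul_one, one_mul,
    mul_assoc, hp.eq, hp.mul_self_mul]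
  abel

theorem pinching_sub_self (hp : IsIdempotentElem p) (a : R) :
    pinching p a - a = (2 * p - 1) * (a * p - p * a) := by
  simp only [pinching, two_mul, mul_sub, sub_mul, add_mul, mul_one, one_mul, mul_assoc,
    hp.mul_self_mul]
  abel

theorem pinching_mul_self_sub (hp : IsIdempotentElem p) {a : R} (ha : IsIdempotentElem a) :
    pinching p a * pinching p a - pinching p a = -((pinching p a - a) * (pinching p a - a)) := by
  simp only [pinching, mul_add, add_mul, mul_sub, sub_mul, mul_one, one_mul, mul_assoc,
    hp.mul_self_mul, ha.eq, ha.mul_self_mul]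
  abel

theorem IsSelfAdjoint.pinching [StarRing R] (hp : IsSelfAdjoint p) {a : R}
    (ha : IsSelfAdjoint a) : IsSelfAdjoint (pinching p a) :=
  (ha.conjugate_self hp).add (ha.conjugate_self ((IsSelfAdjoint.one R).sub hp))

end Pinching

theorem IsStarProjection.norm_pinching_sub_self {E : Type*} [NormedRing E] [StarRing E]
    [CStarRing E] {p : E} (hp : IsStarProjection p) (a : E) :
    ‖pinching p a - a‖ = ‖a * p - p * a‖ := by
  rw [pinching_sub_self hp.isIdempotentElem,
    CStarRing.norm_mem_unitary_mul _ hp.two_mul_sub_one_mem_unitary]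

noncomputable def halfStep (t : ℝ) : ℝ := if t < 1 / 2 then 0 else 1

theorem continuousAt_halfStep {t : ℝ} (ht : t ≠ 1 / 2) : ContinuousAt halfStep t := by
  rcases ht.lt_or_gt with ht | ht
  · exact (continuousAt_const (y := (0 : ℝ))).congr <|
      Filter.eventuallyEq_of_mem (Iio_mem_nhds ht) fun s hs => (if_pos hs).symm
  · exact (continuousAt_const (y := (1 : ℝ))).congr <|
      Filter.eventuallyEq_of_mem (Ioi_mem_nhds ht) fun s hs => (if_neg hs.le.not_gt).symm

theorem halfStep_mul_self (t : ℝ) : halfStep t * halfStep t = halfStep t := by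
  unfold halfStep
  split_ifs <;> norm_num

theorem abs_halfStep_sub_le (t : ℝ) : |halfStep t - t| ≤ 2 * |t * t - t| := by
  have hfactor : |t * t - t| = |t| * |t - 1| := by rw [← abs_mul, mul_sub, mul_one]
  unfold halfStep
  split_ifs with ht
  · rw [zero_sub, abs_neg, hfactor, abs_of_neg (by linarith : t - 1 < 0)]
    nlinarith [abs_nonneg t]
  · rw [hfactor, abs_of_nonneg (by linarith : (0 : ℝ) ≤ t), abs_sub_comm]
    nlinarith [abs_nonneg (t - 1)]

section Spectral

variable {A : Type*} [CStarAlgebra A] {x : A}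

theorem IsSelfAdjoint.abs_mul_self_sub_le_norm (hx : IsSelfAdjoint x) {t : ℝ}
    (ht : t ∈ spectrum ℝ x) : |t * t - t| ≤ ‖x * x - x‖ := by
  have hcfc : cfc (fun s : ℝ => s * s - s) x = x * x - x := by
    rw [cfc_sub _ _ x, cfc_mul _ _ x, cfc_id' ℝ x]
  have hmem : t * t - t ∈ spectrum ℝ (x * x - x) := by
    rw [← hcfc, cfc_map_spectrum (fun s : ℝ => s * s - s) x]
    exact ⟨t, ht, rfl⟩
  obtain _ | _ := subsingleton_or_nontrivial A
  · simp [spectrum.of_subsingleton] at ht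
  exact spectrum.norm_le_norm_of_mem hmem

theorem IsSelfAdjoint.continuousOn_halfStep (hx : IsSelfAdjoint x) (h : ‖x * x - x‖ < 1 / 4) :
    ContinuousOn halfStep (spectrum ℝ x) := by
  refine fun t ht => (continuousAt_halfStep ?_).continuousWithinAt
  rintro rfl
  have := hx.abs_mul_self_sub_le_norm ht
  norm_num at this
  linarith

theorem IsSelfAdjoint.isStarProjection_cfc_halfStep (hx : IsSelfAdjoint x)
    (h : ‖x * x - x‖ < 1 / 4) : IsStarProjection (cfc halfStep x) := by
  have hc := hx.continuousOn_halfStep h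
  refine ⟨?_, cfc_predicate halfStep x⟩
  rw [IsIdempotentElem, ← cfc_mul halfStep halfStep x hc hc]
  exact cfc_congr fun t _ => halfStep_mul_self t

theorem IsSelfAdjoint.norm_cfc_halfStep_sub_le (hx : IsSelfAdjoint x)
    (h : ‖x * x - x‖ < 1 / 4) : ‖cfc halfStep x - x‖ ≤ 2 * ‖x * x - x‖ := by
  have hdiff : cfc (fun t => halfStep t - t) x = cfc halfStep x - x := by
    rw [cfc_sub halfStep (fun t => t) x (hx.continuousOn_halfStep h), cfc_id' ℝ x]
  rw [← hdiff]
  refine norm_cfc_le (by positivity) fun t ht => ?_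
  exact (abs_halfStep_sub_le t).trans (by gcongr; exact hx.abs_mul_self_sub_le_norm ht)

theorem IsSelfAdjoint.exists_isStarProjection_near (hx : IsSelfAdjoint x)
    (h : ‖x * x - x‖ < 1 / 4) :
    ∃ e : A, IsStarProjection e ∧ ‖e - x‖ ≤ 2 * ‖x * x - x‖ ∧
      ∀ b : A, Commute x b → Commute e b :=
  ⟨cfc halfStep x, hx.isStarProjection_cfc_halfStep h, hx.norm_cfc_halfStep_sub_le h,
    fun _ hb => hb.cfc_real halfStep⟩

end Spectral

theorem stmt_0_general {A : Type*} [NormedRing A] [StarRing A] [CStarRing A]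
    [NormedAlgebra ℂ A] [StarModule ℂ A] [CompleteSpace A]
    (p q : A) (hp : IsSelfAdjoint p) (hp2 : IsIdempotentElem p)
    (hq : IsSelfAdjoint q) (hq2 : IsIdempotentElem q)
    (ε : ℝ) (hε4 : ε < 1 / 4)
    (h : ‖q * p - p * q‖ < ε) :
    ∃ q' : A, IsSelfAdjoint q' ∧ IsIdempotentElem q' ∧
      ‖q' - q‖ < 3 * ε ∧ q' * p = p * q' := by
  let _ : CStarAlgebra A := {}
  set x := pinching p q
  have hxq : ‖x - q‖ = ‖q * p - p * q‖ :=
    IsStarProjection.norm_pinching_sub_self ⟨hp2, hp⟩ q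
  have hxx : ‖x * x - x‖ ≤ ‖q * p - p * q‖ ^ 2 := by
    rw [pinching_mul_self_sub hp2 hq2, norm_neg, ← hxq, sq]
    exact norm_mul_le _ _
  have hm := norm_nonneg (q * p - p * q)
  obtain ⟨e, he, hex, hcomm⟩ := (hp.pinching hq).exists_isStarProjection_near (by nlinarith)
  refine ⟨e, he.isSelfAdjoint, he.isIdempotentElem, ?_, (hcomm p (commute_pinching hp2 q)).eq⟩
  calc ‖e - q‖ ≤ ‖e - x‖ + ‖x - q‖ := norm_sub_le_norm_sub_add_norm_sub e x q
    _ < 3 * ε := by nlinarith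

theorem stmt_0 {A : Type*} [NormedRing A] [StarRing A] [CStarRing A]
    [NormedAlgebra ℂ A] [StarModule ℂ A] [CompleteSpace A]
    (p q : A) (hp : IsSelfAdjoint p) (hp2 : IsIdempotentElem p)
    (hq : IsSelfAdjoint q) (hq2 : IsIdempotentElem q)
    (ε : ℝ) (hε0 : 0 < ε) (hε4 : ε < 1 / 4)
    (h : ‖q * p - p * q‖ < ε) :
    ∃ q' : A, IsSelfAdjoint q' ∧ IsIdempotentElem q' ∧
      ‖q' - q‖ < 3 * ε ∧ q' * p = p * q' :=
  stmt_0_general p q hp hp2 hq hq2 ε hε4 h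
end

section
/- Let H be a Hilbert space and P an orthogonal projection on H. For any bounded operator T on H, ‖PT − TP‖ = max(‖(1 − P)TP‖, ‖PT(1 − P)‖). -/
/-!
With `Q = 1 - P`, the commutator is the off-diagonal operator `PTQ - QTP` in the
decomposition `H = ran P ⊕ ran Q`. Compressing it by the contractions `P`, `Q` recovers each
block, giving `≥`; conversely the two blocks map into orthogonal subspaces and act on the
orthogonal components `Qx`, `Px` of `x`, so Pythagoras twice gives `≤`.
-/

open scoped InnerProductSpace

section Ring

variable {R : Type*} [Ring R] {p : R}

theorem IsIdempotentElem.mul_add_mul_mul_one_sub (hp : IsIdempotentElem p) (s r : R) :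
    p * (p * s * (1 - p) + (1 - p) * r * p) * (1 - p) = p * s * (1 - p) := by
  calc p * (p * s * (1 - p) + (1 - p) * r * p) * (1 - p)
      = (p * p) * s * ((1 - p) * (1 - p)) + (p * (1 - p)) * r * (p * (1 - p)) := by noncomm_ring
    _ = p * s * (1 - p) := by rw [hp.eq, hp.one_sub.eq, hp.mul_one_sub_self]; simp

theorem IsIdempotentElem.one_sub_mul_add_mul_mul (hp : IsIdempotentElem p) (s r : R) :
    (1 - p) * (p * s * (1 - p) + (1 - p) * r * p) * p = (1 - p) * r * p := by
  calc (1 - p) * (p * s * (1 - p) + (1 - p) * r * p) * p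
      = ((1 - p) * p) * s * ((1 - p) * p) + ((1 - p) * (1 - p)) * r * (p * p) := by noncomm_ring
    _ = (1 - p) * r * p := by rw [hp.eq, hp.one_sub.eq, hp.one_sub_mul_self]; simp

end Ring

section CStarRing

variable {E : Type*} [NormedRing E] [StarRing E] [CStarRing E] {p : E}

theorem IsStarProjection.norm_mul_mul_le {q : E} (hp : IsStarProjection p)
    (hq : IsStarProjection q) (a : E) : ‖p * a * q‖ ≤ ‖a‖ :=
  calc ‖p * a * q‖ ≤ ‖p‖ * ‖a‖ * ‖q‖ := norm_mul₃_le
    _ ≤ 1 * ‖a‖ * 1 := by gcongr; exacts [hp.norm_le, hq.norm_le]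
    _ = ‖a‖ := by ring

theorem IsStarProjection.max_norm_le_norm_offDiagonal (hp : IsStarProjection p) (s r : E) :
    max ‖p * s * (1 - p)‖ ‖(1 - p) * r * p‖ ≤ ‖p * s * (1 - p) + (1 - p) * r * p‖ := by
  refine max_le ?_ ?_
  · conv_lhs => rw [← hp.isIdempotentElem.mul_add_mul_mul_one_sub s r]
    exact hp.norm_mul_mul_le hp.one_sub _
  · conv_lhs => rw [← hp.isIdempotentElem.one_sub_mul_add_mul_mul s r]
    exact hp.one_sub.norm_mul_mul_le hp _

end CStarRing

theorem IsIdempotentElem.norm_mul_apply_le {𝕜 E : Type*} [NontriviallyNormedField 𝕜]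
    [SeminormedAddCommGroup E] [NormedSpace 𝕜 E] {q : E →L[𝕜] E} (hq : IsIdempotentElem q)
    (a : E →L[𝕜] E) (x : E) : ‖(a * q) x‖ ≤ ‖a * q‖ * ‖q x‖ := by
  calc ‖(a * q) x‖ = ‖(a * q) (q x)‖ := by
        rw [← mul_apply_eq_comp (a * q), mul_assoc, hq.eq]
    _ ≤ ‖a * q‖ * ‖q x‖ := (a * q).le_opNorm _

section Hilbert

variable {𝕜 H : Type*} [RCLike 𝕜] [NormedAddCommGroup H] [InnerProductSpace 𝕜 H]
  [CompleteSpace H] {P : H →L[𝕜] H}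

theorem IsStarProjection.inner_apply_one_sub_apply (hP : IsStarProjection P) (u v : H) :
    ⟪P u, (1 - P) v⟫_𝕜 = 0 :=
  calc ⟪P u, (1 - P) v⟫_𝕜 = ⟪u, (P * (1 - P)) v⟫_𝕜 := hP.isSelfAdjoint.isSymmetric _ _
    _ = 0 := by rw [hP.mul_one_sub_self]; simp

theorem IsStarProjection.norm_sq_apply_add_norm_sq_one_sub_apply (hP : IsStarProjection P)
    (x : H) : ‖P x‖ ^ 2 + ‖(1 - P) x‖ ^ 2 = ‖x‖ ^ 2 := by
  simp only [sq]
  rw [← norm_add_sq_eq_norm_sq_add_norm_sq_of_inner_eq_zero _ _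
    (hP.inner_apply_one_sub_apply x x)]
  simp

theorem IsStarProjection.norm_offDiagonal_le_max (hP : IsStarProjection P) (S R : H →L[𝕜] H) :
    ‖P * S * (1 - P) + (1 - P) * R * P‖ ≤ max ‖P * S * (1 - P)‖ ‖(1 - P) * R * P‖ := by
  set M := max ‖P * S * (1 - P)‖ ‖(1 - P) * R * P‖
  have hM : 0 ≤ M := (norm_nonneg _).trans (le_max_left _ _)
  refine ContinuousLinearMap.opNorm_le_bound _ hM fun x ↦ ?_
  have hS : ‖(P * S * (1 - P)) x‖ ≤ M * ‖(1 - P) x‖ :=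
    (hP.one_sub.isIdempotentElem.norm_mul_apply_le _ x).trans
      (by gcongr; exact le_max_left _ _)
  have hR : ‖((1 - P) * R * P) x‖ ≤ M * ‖P x‖ :=
    (hP.isIdempotentElem.norm_mul_apply_le _ x).trans (by gcongr; exact le_max_right _ _)
  have hpyth : ‖(P * S * (1 - P) + (1 - P) * R * P) x‖ ^ 2
      = ‖(P * S * (1 - P)) x‖ ^ 2 + ‖((1 - P) * R * P) x‖ ^ 2 := by
    simp only [sq, add_apply]
    exact norm_add_sq_eq_norm_sq_add_norm_sq_of_inner_eq_zero _ _
      (hP.inner_apply_one_sub_apply _ _)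
  refine le_of_sq_le_sq ?_ (by positivity)
  calc ‖(P * S * (1 - P) + (1 - P) * R * P) x‖ ^ 2
      = ‖(P * S * (1 - P)) x‖ ^ 2 + ‖((1 - P) * R * P) x‖ ^ 2 := hpyth
    _ ≤ (M * ‖(1 - P) x‖) ^ 2 + (M * ‖P x‖) ^ 2 := by gcongr
    _ = M ^ 2 * (‖P x‖ ^ 2 + ‖(1 - P) x‖ ^ 2) := by ring
    _ = (M * ‖x‖) ^ 2 := by rw [hP.norm_sq_apply_add_norm_sq_one_sub_apply]; ring

theorem IsStarProjection.norm_offDiagonal_eq_max (hP : IsStarProjection P) (S R : H →L[𝕜] H) :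
    ‖P * S * (1 - P) + (1 - P) * R * P‖ = max ‖P * S * (1 - P)‖ ‖(1 - P) * R * P‖ :=
  (hP.norm_offDiagonal_le_max S R).antisymm (hP.max_norm_le_norm_offDiagonal S R)

end Hilbert

theorem stmt_7 {H : Type*} [NormedAddCommGroup H] [InnerProductSpace ℂ H] [CompleteSpace H]
    (P : H →L[ℂ] H) (hP : IsSelfAdjoint P) (hP2 : IsIdempotentElem P)
    (T : H →L[ℂ] H) :
    ‖P * T - T * P‖ = max ‖(1 - P) * T * P‖ ‖P * T * (1 - P)‖ := by
  have hproj : IsStarProjection P := ⟨hP2, hP⟩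
  have hcomm : P * T - T * P = P * T * (1 - P) + (1 - P) * (-T) * P := by noncomm_ring
  rw [hcomm, hproj.norm_offDiagonal_eq_max, max_comm, mul_neg, neg_mul, norm_neg]
end

section
/- Let ξ₁,…,ξₙ be unit vectors in a Hilbert space with |⟨ξᵢ, ξⱼ⟩| < δ for all i ≠ j, where δ is sufficiently small (e.g. δ < 1/(4n²)). Then the Gram–Schmidt orthonormalization ξ̃₁,…,ξ̃ₙ of ξ₁,…,ξₙ satisfies ‖ξ̃ⱼ − ξⱼ‖ ≤ C(n)δ for an explicit constant C(n) depending only on n. -/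
/-!
Write `u k = gramSchmidt ξ k` and `v k = gramSchmidtNormed ξ k`, so that
`ξ k = u k + ∑ i < k, ⟪v i, ξ k⟫ v i`. By strong induction on `i`, `‖⟪v i, ξ j⟫‖ ≤ 2δ` for
`i < j`: the induction hypothesis gives `‖u i - ξ i‖ ≤ 2iδ` and `‖⟪u i, ξ j⟫‖ ≤ δ + 4iδ²`, and
dividing by `‖u i‖ ≥ 1 - 2iδ` keeps the bound at `2δ` as long as `8iδ ≤ 1`. Normalizing `u j`
at most doubles its distance to the unit vector `ξ j`, so `‖v j - ξ j‖ ≤ 4jδ`.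
-/

open Finset InnerProductSpace

section GramSchmidt

variable {𝕜 E ι : Type*} [RCLike 𝕜] [NormedAddCommGroup E] [InnerProductSpace 𝕜 E]
  [LinearOrder ι] [LocallyFiniteOrderBot ι] [WellFoundedLT ι]

local notation "⟪" x ", " y "⟫" => inner 𝕜 x y

theorem inner_gramSchmidtNormed_smul_gramSchmidtNormed (f : ι → E) (i : ι) (x : E) :
    ⟪gramSchmidtNormed 𝕜 f i, x⟫ • gramSchmidtNormed 𝕜 f i
      = (⟪gramSchmidt 𝕜 f i, x⟫ / (‖gramSchmidt 𝕜 f i‖ : 𝕜) ^ 2) • gramSchmidt 𝕜 f i := by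
  rw [gramSchmidtNormed, inner_smul_left, smul_smul, map_inv₀, RCLike.conj_ofReal]
  congr 1
  ring

theorem gramSchmidt_eq_sub_sum_gramSchmidtNormed (f : ι → E) (n : ι) :
    gramSchmidt 𝕜 f n
      = f n - ∑ i ∈ Iio n, ⟪gramSchmidtNormed 𝕜 f i, f n⟫ • gramSchmidtNormed 𝕜 f i := by
  simp only [inner_gramSchmidtNormed_smul_gramSchmidtNormed]
  exact eq_sub_of_add_eq (gramSchmidt_def'' 𝕜 f n).symm

theorem norm_gramSchmidtNormed_le_one (f : ι → E) (n : ι) : ‖gramSchmidtNormed 𝕜 f n‖ ≤ 1 := by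
  by_cases h : gramSchmidtNormed 𝕜 f n = 0
  · simp [h]
  · exact (gramSchmidtNormed_unit_length' h).le

theorem norm_inner_gramSchmidtNormed (f : ι → E) (n : ι) (x : E) :
    ‖⟪gramSchmidtNormed 𝕜 f n, x⟫‖ = ‖⟪gramSchmidt 𝕜 f n, x⟫‖ / ‖gramSchmidt 𝕜 f n‖ := by
  rw [gramSchmidtNormed, inner_smul_left, norm_mul, RCLike.norm_conj, norm_inv,
    RCLike.norm_ofReal, abs_norm, inv_mul_eq_div]

end GramSchmidt

theorem norm_inv_norm_smul_sub_le {𝕜 E : Type*} [RCLike 𝕜] [NormedAddCommGroup E]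
    [NormedSpace 𝕜 E] {u x : E} (hx : ‖x‖ = 1) :
    ‖(‖u‖⁻¹ : 𝕜) • u - x‖ ≤ 2 * ‖u - x‖ := by
  by_cases hu : u = 0
  · simp [hu, hx]
  have hnormalize : ‖(‖u‖⁻¹ : 𝕜) • u - u‖ = |1 - ‖u‖| := by
    have hu' : ‖u‖ ≠ 0 := norm_ne_zero_iff.mpr hu
    have hsmul : (‖u‖⁻¹ : 𝕜) • u - u = ((‖u‖⁻¹ - 1 : ℝ) : 𝕜) • u := by simp [sub_smul]
    rw [hsmul, norm_smul, RCLike.norm_ofReal, ← abs_norm u, ← abs_mul, abs_norm, sub_mul,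
      inv_mul_cancel₀ hu', one_mul, abs_sub_comm]
  calc ‖(‖u‖⁻¹ : 𝕜) • u - x‖ ≤ ‖(‖u‖⁻¹ : 𝕜) • u - u‖ + ‖u - x‖ :=
        norm_sub_le_norm_sub_add_norm_sub _ _ _
    _ = |‖x‖ - ‖u‖| + ‖u - x‖ := by rw [hnormalize, hx]
    _ ≤ ‖u - x‖ + ‖u - x‖ := by gcongr; rw [norm_sub_rev]; exact abs_norm_sub_norm_le _ _
    _ = 2 * ‖u - x‖ := by ring

section Overlap

variable {𝕜 E : Type*} [RCLike 𝕜] [NormedAddCommGroup E] [InnerProductSpace 𝕜 E]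

local notation "⟪" x ", " y "⟫" => inner 𝕜 x y

theorem sum_Iio_le_mul {f : ℕ → ℝ} {k : ℕ} {ε : ℝ} (h : ∀ i < k, f i ≤ ε) :
    ∑ i ∈ Iio k, f i ≤ k * ε := by
  simpa using sum_le_card_nsmul (Iio k) f ε fun i hi ↦ h i (mem_Iio.mp hi)

theorem norm_gramSchmidt_sub_le (ξ : ℕ → E) {k : ℕ} {ε : ℝ}
    (h : ∀ i < k, ‖⟪gramSchmidtNormed 𝕜 ξ i, ξ k⟫‖ ≤ ε) :
    ‖gramSchmidt 𝕜 ξ k - ξ k‖ ≤ k * ε := by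
  rw [gramSchmidt_eq_sub_sum_gramSchmidtNormed, sub_sub_cancel_left, norm_neg]
  refine (norm_sum_le _ _).trans (sum_Iio_le_mul fun i hi ↦ ?_)
  rw [norm_smul]
  exact (mul_le_of_le_one_right (norm_nonneg _) (norm_gramSchmidtNormed_le_one ξ i)).trans
    (h i hi)

theorem norm_inner_gramSchmidt_le (ξ : ℕ → E) {k j : ℕ} {ε : ℝ}
    (hk : ∀ i < k, ‖⟪gramSchmidtNormed 𝕜 ξ i, ξ k⟫‖ ≤ ε)
    (hj : ∀ i < k, ‖⟪gramSchmidtNormed 𝕜 ξ i, ξ j⟫‖ ≤ ε) :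
    ‖⟪gramSchmidt 𝕜 ξ k, ξ j⟫‖ ≤ ‖⟪ξ k, ξ j⟫‖ + k * ε ^ 2 := by
  rw [gramSchmidt_eq_sub_sum_gramSchmidtNormed, inner_sub_left, sum_inner]
  refine (norm_sub_le _ _).trans (add_le_add_right ((norm_sum_le _ _).trans
    (sum_Iio_le_mul fun i hi ↦ ?_)) _)
  rw [inner_smul_left, norm_mul, RCLike.norm_conj, sq]
  exact mul_le_mul (hk i hi) (hj i hi) (norm_nonneg _) ((norm_nonneg _).trans (hk i hi))

theorem norm_inner_gramSchmidtNormed_le_two_mul {ξ : ℕ → E} {n : ℕ} {δ : ℝ}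
    (hξ : ∀ j < n, ‖ξ j‖ = 1) (hξξ : ∀ i < n, ∀ j < n, i ≠ j → ‖⟪ξ i, ξ j⟫‖ ≤ δ)
    (hδ : 8 * ((n : ℝ) - 1) * δ ≤ 1) {i j : ℕ} (hij : i < j) (hj : j < n) :
    ‖⟪gramSchmidtNormed 𝕜 ξ i, ξ j⟫‖ ≤ 2 * δ := by
  induction i using Nat.strong_induction_on generalizing j with
  | _ i ih =>
  have hi : ∀ l < i, ‖⟪gramSchmidtNormed 𝕜 ξ l, ξ i⟫‖ ≤ 2 * δ :=
    fun l hl ↦ ih l hl hl (hij.trans hj)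
  have hj' : ∀ l < i, ‖⟪gramSchmidtNormed 𝕜 ξ l, ξ j⟫‖ ≤ 2 * δ :=
    fun l hl ↦ ih l hl (hl.trans hij) hj
  have hδ₀ : 0 ≤ δ := (norm_nonneg _).trans (hξξ i (hij.trans hj) j hj hij.ne)
  have hsmall : 8 * i * δ ≤ 1 := by
    have : (i : ℝ) + 2 ≤ n := by exact_mod_cast (by omega : i + 2 ≤ n)
    nlinarith
  have hu : 1 - i * (2 * δ) ≤ ‖gramSchmidt 𝕜 ξ i‖ := by
    have := norm_sub_norm_le (ξ i) (gramSchmidt 𝕜 ξ i)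
    rw [hξ i (hij.trans hj), norm_sub_rev] at this
    linarith [norm_gramSchmidt_sub_le ξ hi]
  have hinner := norm_inner_gramSchmidt_le ξ hi hj'
  have hξij := hξξ i (hij.trans hj) j hj hij.ne
  rw [norm_inner_gramSchmidtNormed, div_le_iff₀ (by nlinarith)]
  nlinarith

theorem norm_gramSchmidtNormed_sub_le_four_mul {ξ : ℕ → E} {n : ℕ} {δ : ℝ}
    (hξ : ∀ j < n, ‖ξ j‖ = 1) (hξξ : ∀ i < n, ∀ j < n, i ≠ j → ‖⟪ξ i, ξ j⟫‖ ≤ δ)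
    (hδ : 8 * ((n : ℝ) - 1) * δ ≤ 1) {j : ℕ} (hj : j < n) :
    ‖gramSchmidtNormed 𝕜 ξ j - ξ j‖ ≤ 4 * j * δ :=
  calc ‖gramSchmidtNormed 𝕜 ξ j - ξ j‖ ≤ 2 * ‖gramSchmidt 𝕜 ξ j - ξ j‖ :=
        norm_inv_norm_smul_sub_le (hξ j hj)
    _ ≤ 2 * (j * (2 * δ)) := by
        gcongr
        exact norm_gramSchmidt_sub_le ξ fun i hi ↦
          norm_inner_gramSchmidtNormed_le_two_mul hξ hξξ hδ hi hj
    _ = 4 * j * δ := by ring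

end Overlap

theorem stmt_12_general {H : Type*} [NormedAddCommGroup H] [InnerProductSpace ℂ H]
    (n : ℕ) (hn : 0 < n) :
    ∃ C : ℝ, 0 < C ∧
      ∀ (ξ : ℕ → H) (δ : ℝ), 0 < δ → δ < 1 / (4 * (n : ℝ) ^ 2) →
        (∀ j < n, ‖ξ j‖ = 1) →
        (∀ i < n, ∀ j < n, i ≠ j → ‖(inner ℂ (ξ i) (ξ j) : ℂ)‖ < δ) →
        ∀ j < n, ‖InnerProductSpace.gramSchmidtNormed ℂ ξ j - ξ j‖ ≤ C * δ := by
  refine ⟨4 * n, by positivity, fun ξ δ hδ hδn hξ hξξ j hj ↦ ?_⟩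
  have hsmall : 8 * ((n : ℝ) - 1) * δ ≤ 1 := by
    rw [lt_div_iff₀ (by positivity)] at hδn
    nlinarith [sq_nonneg ((n : ℝ) - 1)]
  calc ‖gramSchmidtNormed ℂ ξ j - ξ j‖ ≤ 4 * j * δ :=
        norm_gramSchmidtNormed_sub_le_four_mul hξ (fun i hi j hj hij ↦ (hξξ i hi j hj hij).le)
          hsmall hj
    _ ≤ 4 * n * δ := by gcongr

theorem stmt_12 {H : Type*} [NormedAddCommGroup H] [InnerProductSpace ℂ H] [CompleteSpace H]
    (n : ℕ) (hn : 0 < n) :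
    ∃ C : ℝ, 0 < C ∧
      ∀ (ξ : ℕ → H) (δ : ℝ), 0 < δ → δ < 1 / (4 * (n : ℝ) ^ 2) →
        (∀ j < n, ‖ξ j‖ = 1) →
        (∀ i < n, ∀ j < n, i ≠ j → ‖(inner ℂ (ξ i) (ξ j) : ℂ)‖ < δ) →
        ∀ j < n, ‖InnerProductSpace.gramSchmidtNormed ℂ ξ j - ξ j‖ ≤ C * δ :=
  stmt_12_general n hn
end
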